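/- arXiv:1111.6331 — 4 statements merged into one kernel-verified Lean document; each statement's English description precedes it below -/
import Mathlib

section
/- For every H ∈ (0,1), every t ∈ (0,1], every integer j ≥ 0, and every n = 2^j + k with 0 ≤ k < 2^j such that k + 2 ≤ k̂_{t,j}, the Haar coefficient of f_t^{(1)} satisfies ⟨f_t^{(1)}, ℋ_n⟩² ≤ 2^{−2jH} · (k̂_{t,j} − (k+1))^{2H−3} · (H − 1/2)²/16. -/
open MeasureTheory ProbabilityTheory Real Filter

noncomputable section

/-- The mother Haar wavelet: 1 on [0,1/2), -1 on [1/2,1], 0 otherwise. -/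
def haarMother (s : ℝ) : ℝ :=
  if s ∈ Set.Ico (0 : ℝ) (1/2) then 1 else if s ∈ Set.Icc (1/2 : ℝ) 1 then -1 else 0

/-- The Haar orthonormal basis of L²[0,1]: `haarFun 0 = 1` on `[0,1]`, and for
`n = 2^j + k` with `0 ≤ k < 2^j`, `haarFun n s = 2^(j/2) * haarMother (2^j * s - k)`. -/
def haarFun (n : ℕ) (s : ℝ) : ℝ :=
  if n = 0 then (if s ∈ Set.Icc (0 : ℝ) 1 then 1 else 0)
  else (2 : ℝ) ^ ((Nat.log2 n : ℝ) / 2) *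
    haarMother ((2 : ℝ) ^ (Nat.log2 n : ℕ) * s - ((n - 2 ^ Nat.log2 n : ℕ) : ℝ))

/-- Inner product on L²[0,1]. -/
def innerUnit (f g : ℝ → ℝ) : ℝ := ∫ s in (0 : ℝ)..1, f s * g s

/-- Inner product on L²[-1,0]. -/
def innerNeg (f g : ℝ → ℝ) : ℝ := ∫ s in (-1 : ℝ)..0, f s * g s

/-- The Haar orthonormal basis of L²[-1,0]. -/
def haarFunNeg (n : ℕ) (s : ℝ) : ℝ := haarFun n (s + 1)

/-- `f_t^{(1)}(s) = (t-s)^(H-1/2)` for `s ∈ [0,t)`, `0` otherwise. -/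
def f1 (H t : ℝ) (s : ℝ) : ℝ := if 0 ≤ s ∧ s < t then (t - s) ^ (H - 1/2) else 0

/-- `f_t^{(2)}(s) = (t-s)^(H-1/2) - (-s)^(H-1/2)` for `s ∈ [-1,0)`, `0` otherwise. -/
def f2 (H t : ℝ) (s : ℝ) : ℝ :=
  if -1 ≤ s ∧ s < 0 then (t - s) ^ (H - 1/2) - (-s) ^ (H - 1/2) else 0

/-- Haar coefficient `⟨f_t^{(1)}, ℋ_n⟩`. -/
def coeff1 (H t : ℝ) (n : ℕ) : ℝ := innerUnit (f1 H t) (haarFun n)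

/-- Haar coefficient `⟨f_t^{(2)}, ℋ̃_n⟩`. -/
def coeff2 (H t : ℝ) (n : ℕ) : ℝ := innerNeg (f2 H t) (haarFunNeg n)

/-- `g_n(t,H) = ∫₀¹ ((t + 1/x)^(H-3/2) - (1/x)^(H-3/2)) x⁻³ (∫₀ˣ ℋ_n(y) dy) dx`. -/
def gCoeff (H t : ℝ) (n : ℕ) : ℝ :=
  ∫ x in (0 : ℝ)..1,
    ((t + x⁻¹) ^ (H - 3/2) - (x⁻¹) ^ (H - 3/2)) * (x⁻¹) ^ (3 : ℕ) *
      (∫ y in (0 : ℝ)..x, haarFun n y)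

/-- `C_H = 1/Γ(H + 1/2)`. -/
def CH (H : ℝ) : ℝ := 1 / Real.Gamma (H + 1/2)

/-!
Left of `t` the integrand is smooth, so on the dyadic interval `[k/2^j, (k+1)/2^j]` the Haar
coefficient is `2^(j/2)/q` times the second difference of `x ↦ x^q`, `q = H + 1/2`, with step
`h = 2^(-j-1)` at `x = t - (k+1)/2^j`. Two applications of the mean value inequality bound this
second difference by `|q(q-1)| h² x^(q-2)`, and `x ≥ (k̂ - k - 1)/2^j` because `t ≥ k̂/2^j`.
-/

open Set

theorem abs_second_diff_le {f f' f'' : ℝ → ℝ} {x h M : ℝ} (hh : 0 ≤ h)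
    (hf : ∀ y ∈ Icc x (x + 2 * h), HasDerivAt f (f' y) y)
    (hf' : ∀ y ∈ Icc x (x + 2 * h), HasDerivAt f' (f'' y) y)
    (hM : ∀ y ∈ Icc x (x + 2 * h), |f'' y| ≤ M) :
    |f (x + 2 * h) - 2 * f (x + h) + f x| ≤ M * h ^ 2 := by
  have hsub : ∀ y ∈ Icc x (x + h), Icc y (y + h) ⊆ Icc x (x + 2 * h) := fun y hy z hz =>
    ⟨hy.1.trans hz.1, by linarith [hz.2, hy.2]⟩
  have hf'_step : ∀ y ∈ Icc x (x + h), |f' (y + h) - f' y| ≤ M * h := by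
    intro y hy
    have := norm_image_sub_le_of_norm_deriv_le_segment' (f := f') (C := M)
      (fun z hz => (hf' z (hsub y hy hz)).hasDerivWithinAt)
      (fun z hz => hM z (hsub y hy (Ico_subset_Icc_self hz))) (y + h) ⟨by linarith, le_rfl⟩
    simpa using this
  have hD := norm_image_sub_le_of_norm_deriv_le_segment' (f := fun y => f (y + h) - f y)
    (C := M * h)
    (fun y hy => (((hf (y + h) (by constructor <;> linarith [hy.1, hy.2])).comp_add_const
      y h).sub (hf y (hsub y hy ⟨le_rfl, by linarith⟩))).hasDerivWithinAt)
    (fun y hy => hf'_step y (Ico_subset_Icc_self hy)) (x + h) ⟨by linarith, le_rfl⟩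
  rw [show x + h + h = x + 2 * h by ring] at hD
  calc |f (x + 2 * h) - 2 * f (x + h) + f x|
      = ‖f (x + 2 * h) - f (x + h) - (f (x + h) - f x)‖ := by rw [Real.norm_eq_abs]; ring_nf
    _ ≤ M * h * (x + h - x) := hD
    _ = M * h ^ 2 := by ring

theorem abs_rpow_second_diff_le {q x h : ℝ} (hq : q ≤ 2) (hx : 0 < x) (hh : 0 ≤ h) :
    |(x + 2 * h) ^ q - 2 * (x + h) ^ q + x ^ q| ≤ |q * (q - 1)| * x ^ (q - 2) * h ^ 2 := by
  have hpos : ∀ y ∈ Icc x (x + 2 * h), y ≠ 0 := fun y hy => (hx.trans_le hy.1).ne'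
  refine abs_second_diff_le (f' := fun y => q * y ^ (q - 1))
    (f'' := fun y => q * ((q - 1) * y ^ (q - 1 - 1))) hh
    (fun y hy => hasDerivAt_rpow_const (Or.inl (hpos y hy)))
    (fun y hy => (hasDerivAt_rpow_const (Or.inl (hpos y hy))).const_mul q) fun y hy => ?_
  rw [← mul_assoc, abs_mul, abs_of_pos (rpow_pos_of_pos (hx.trans_le hy.1) _),
    show q - 1 - 1 = q - 2 by ring]
  exact mul_le_mul_of_nonneg_left (rpow_le_rpow_of_nonpos hx hy.1 (by linarith)) (abs_nonneg _)

theorem haarMother_of_neg {u : ℝ} (hu : u < 0) : haarMother u = 0 := by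
  simp only [haarMother, mem_Ico, mem_Icc]; split_ifs <;> grind

theorem haarMother_of_mem_Ioo_zero_half {u : ℝ} (hu : u ∈ Ioo 0 (1 / 2)) :
    haarMother u = 1 := by
  simp only [haarMother, mem_Ico, mem_Icc, mem_Ioo] at *; split_ifs <;> grind

theorem haarMother_of_mem_Ioo_half_one {u : ℝ} (hu : u ∈ Ioo (1 / 2) 1) :
    haarMother u = -1 := by
  simp only [haarMother, mem_Ico, mem_Icc, mem_Ioo] at *; split_ifs <;> grind

theorem haarMother_of_one_lt {u : ℝ} (hu : 1 < u) : haarMother u = 0 := by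
  simp only [haarMother, mem_Ico, mem_Icc]; split_ifs <;> grind

theorem haarFun_two_pow_add {j k : ℕ} (hk : k < 2 ^ j) (s : ℝ) :
    haarFun (2 ^ j + k) s = (2 : ℝ) ^ ((j : ℝ) / 2) * haarMother (2 ^ j * s - k) := by
  have hlog : Nat.log2 (2 ^ j + k) = j := by
    rw [Nat.log2_eq_log_two]
    exact Nat.log_eq_of_pow_le_of_lt_pow (Nat.le_add_right _ _) (by rw [pow_succ]; omega)
  simp [haarFun, hlog]

theorem integral_mul_haarFun {f : ℝ → ℝ} {j k : ℕ} (hk : k < 2 ^ j)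
    (hf : IntervalIntegrable f volume (k / 2 ^ j) ((k + 1) / 2 ^ j)) :
    ∫ s in (0 : ℝ)..1, f s * haarFun (2 ^ j + k) s
      = (2 : ℝ) ^ ((j : ℝ) / 2) * ((∫ s in (k / 2 ^ j : ℝ)..((k + 1 / 2) / 2 ^ j), f s)
          - ∫ s in ((k + 1 / 2) / 2 ^ j : ℝ)..((k + 1) / 2 ^ j), f s) := by
  set e : ℝ := 2 ^ j
  set c : ℝ := 2 ^ ((j : ℝ) / 2)
  set a : ℝ := k / e
  set m : ℝ := (k + 1 / 2) / e
  set b : ℝ := (k + 1) / e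
  have he : 0 < e := by positivity
  have ha : 0 ≤ a := by positivity
  have ham : a ≤ m := div_le_div_of_nonneg_right (by linarith) he.le
  have hmb : m ≤ b := div_le_div_of_nonneg_right (by linarith) he.le
  have hb : b ≤ 1 := (div_le_one he).mpr (by simp only [e]; exact_mod_cast hk)
  have hscale : ∀ {s r : ℝ}, r / e < s ↔ r < e * s := fun {s r} => div_lt_iff₀' he
  have hscale' : ∀ {s r : ℝ}, s < r / e ↔ e * s < r := fun {s r} => lt_div_iff₀' he
  set g : ℝ → ℝ := fun s => f s * haarFun (2 ^ j + k) s
  have hg : ∀ s, g s = f s * (c * haarMother (e * s - k)) := fun s => by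
    simp only [g, haarFun_two_pow_add hk]; rfl
  have h₀ : EqOn g 0 (Ioo 0 a) := fun s hs => by
    rw [hg, haarMother_of_neg (by linarith [hscale'.mp hs.2])]; simp
  have h₁ : EqOn g (fun s => c * f s) (Ioo a m) := fun s hs => by
    rw [hg, haarMother_of_mem_Ioo_zero_half ⟨by linarith [hscale.mp hs.1],
      by linarith [hscale'.mp hs.2]⟩]; ring
  have h₂ : EqOn g (fun s => -(c * f s)) (Ioo m b) := fun s hs => by
    rw [hg, haarMother_of_mem_Ioo_half_one ⟨by linarith [hscale.mp hs.1],
      by linarith [hscale'.mp hs.2]⟩]; ring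
  have h₃ : EqOn g 0 (Ioo b 1) := fun s hs => by
    rw [hg, haarMother_of_one_lt (by linarith [hscale.mp hs.1])]; simp
  have hf₁ : IntervalIntegrable f volume a m := hf.mono_set (uIcc_subset_uIcc_left (by
    rw [uIcc_of_le (ham.trans hmb)]; exact ⟨ham, hmb⟩))
  have hf₂ : IntervalIntegrable f volume m b := hf.mono_set (uIcc_subset_uIcc_right (by
    rw [uIcc_of_le (ham.trans hmb)]; exact ⟨ham, hmb⟩))
  have hi₀ : IntervalIntegrable g volume 0 a :=
    intervalIntegrable_const.congr_uIoo (uIoo_of_le ha ▸ h₀.symm)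
  have hi₁ : IntervalIntegrable g volume a m :=
    (hf₁.const_mul c).congr_uIoo (uIoo_of_le ham ▸ h₁.symm)
  have hi₂ : IntervalIntegrable g volume m b :=
    (hf₂.const_mul c).neg.congr_uIoo (uIoo_of_le hmb ▸ h₂.symm)
  rw [← intervalIntegral.integral_add_adjacent_intervals (hi₀.trans (hi₁.trans hi₂))
      (intervalIntegrable_const.congr_uIoo (uIoo_of_le hb ▸ h₃.symm)),
    ← intervalIntegral.integral_add_adjacent_intervals hi₀ (hi₁.trans hi₂),
    ← intervalIntegral.integral_add_adjacent_intervals hi₁ hi₂,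
    intervalIntegral.integral_congr_Ioo_of_le ha h₀,
    intervalIntegral.integral_congr_Ioo_of_le ham h₁,
    intervalIntegral.integral_congr_Ioo_of_le hmb h₂,
    intervalIntegral.integral_congr_Ioo_of_le hb h₃]
  simp only [Pi.zero_apply, intervalIntegral.integral_zero, intervalIntegral.integral_neg,
    intervalIntegral.integral_const_mul]
  ring

section f1

variable {H t a b : ℝ}

theorem f1_eqOn_Ioo (ha : 0 ≤ a) (hbt : b ≤ t) :
    EqOn (f1 H t) (fun s => (t - s) ^ (H - 1 / 2)) (Ioo a b) :=
  fun _ hs => if_pos ⟨ha.trans hs.1.le, hs.2.trans_le hbt⟩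

theorem intervalIntegrable_f1 (hH : -1 / 2 < H) (ha : 0 ≤ a) (hab : a ≤ b) (hbt : b ≤ t) :
    IntervalIntegrable (f1 H t) volume a b := by
  have := (intervalIntegral.intervalIntegrable_rpow' (a := t - a) (b := t - b)
    (r := H - 1 / 2) (by linarith)).comp_sub_left t
  simp only [sub_sub_cancel] at this
  exact this.congr_uIoo (uIoo_of_le hab ▸ (f1_eqOn_Ioo ha hbt).symm)

theorem integral_f1 (hH : -1 / 2 < H) (ha : 0 ≤ a) (hab : a ≤ b) (hbt : b ≤ t) :
    ∫ s in a..b, f1 H t s = ((t - a) ^ (H + 1 / 2) - (t - b) ^ (H + 1 / 2)) / (H + 1 / 2) := by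
  rw [intervalIntegral.integral_congr_Ioo_of_le hab (f1_eqOn_Ioo ha hbt),
    intervalIntegral.integral_comp_sub_left (fun s => s ^ (H - 1 / 2)),
    integral_rpow (Or.inl (by linarith)), show H - 1 / 2 + 1 = H + 1 / 2 by ring]

end f1

theorem coeff1_two_pow_add {H t : ℝ} {j k : ℕ} (hH : -1 / 2 < H) (hk : k < 2 ^ j)
    (hbt : (k + 1) / 2 ^ j ≤ t) :
    coeff1 H t (2 ^ j + k) = (2 : ℝ) ^ ((j : ℝ) / 2) / (H + 1 / 2) *
      ((t - k / 2 ^ j) ^ (H + 1 / 2) - 2 * (t - (k + 1 / 2) / 2 ^ j) ^ (H + 1 / 2)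
        + (t - (k + 1) / 2 ^ j) ^ (H + 1 / 2)) := by
  have he : (0 : ℝ) < 2 ^ j := by positivity
  have ha : (0 : ℝ) ≤ k / 2 ^ j := by positivity
  have ham : (k : ℝ) / 2 ^ j ≤ (k + 1 / 2) / 2 ^ j :=
    div_le_div_of_nonneg_right (by linarith) he.le
  have hmb : ((k : ℝ) + 1 / 2) / 2 ^ j ≤ (k + 1) / 2 ^ j :=
    div_le_div_of_nonneg_right (by linarith) he.le
  rw [coeff1, innerUnit,
    integral_mul_haarFun hk (intervalIntegrable_f1 hH ha (ham.trans hmb) hbt),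
    integral_f1 hH ha ham (hmb.trans hbt), integral_f1 hH (ha.trans ham) hmb hbt]
  ring

theorem coeff1_two_pow_add_sq_le {H t : ℝ} {j k : ℕ} (hH₀ : -1 / 2 < H) (hH₁ : H ≤ 3 / 2)
    (hk : k < 2 ^ j) (hbt : (k + 1) / 2 ^ j < t) :
    coeff1 H t (2 ^ j + k) ^ 2
      ≤ (H - 1 / 2) ^ 2 / 16 / (2 ^ j) ^ 3 * (t - (k + 1) / 2 ^ j) ^ (2 * H - 3) := by
  set e : ℝ := 2 ^ j
  set x := t - (k + 1) / e
  set q := H + 1 / 2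
  have he : 0 < e := by positivity
  have hx : 0 < x := sub_pos.mpr hbt
  have hq : q ≠ 0 := by simp only [q]; linarith
  have hc : ((2 : ℝ) ^ ((j : ℝ) / 2)) ^ 2 = e := by
    rw [← rpow_natCast, ← rpow_mul zero_le_two, Nat.cast_ofNat, div_mul_cancel₀ _ two_ne_zero,
      rpow_natCast]
  have hxq : (x ^ (q - 2)) ^ 2 = x ^ (2 * H - 3) := by
    rw [← rpow_natCast, ← rpow_mul hx.le]; congr 1; simp only [q]; push_cast; ring
  rw [coeff1_two_pow_add hH₀ hk hbt.le,
    show t - k / e = x + 2 * (1 / (2 * e)) by simp only [x]; field_simp; ring,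
    show t - (k + 1 / 2) / e = x + 1 / (2 * e) by simp only [x]; field_simp; ring, mul_pow,
    ← sq_abs (_ - _ + _)]
  calc _ ≤ (2 ^ ((j : ℝ) / 2) / q) ^ 2
        * (|q * (q - 1)| * x ^ (q - 2) * (1 / (2 * e)) ^ 2) ^ 2 := by
        gcongr
        exact abs_rpow_second_diff_le (by linarith) hx (by positivity)
    _ = _ := by
        rw [mul_pow, mul_pow, sq_abs, div_pow, hc, hxq]
        field_simp
        ring

theorem stmt9_general (H : ℝ) (hH : H ∈ Set.Ioo (0 : ℝ) 1) (t : ℝ)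
    (j khat : ℕ)
    (hmem : (khat : ℝ) / 2 ^ j ≤ t ∧ (t < ((khat : ℝ) + 1) / 2 ^ j ∨ khat + 1 = 2 ^ j))
    (k : ℕ) (hk : k < 2 ^ j) (hkk : k + 2 ≤ khat) :
    (coeff1 H t (2 ^ j + k)) ^ 2
      ≤ (2 : ℝ) ^ (-(2 * (j : ℝ) * H)) * ((khat : ℝ) - ((k : ℝ) + 1)) ^ (2 * H - 3)
          * (H - 1/2) ^ 2 / 16 := by
  obtain ⟨hH₀, hH₁⟩ := hH
  set d : ℝ := khat - (k + 1)
  have he : (0 : ℝ) < 2 ^ j := by positivity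
  have hkk' : (k : ℝ) + 2 ≤ khat := by exact_mod_cast hkk
  have hd : 0 < d := by simp only [d]; linarith
  have hdt : d / 2 ^ j ≤ t - (k + 1) / 2 ^ j := by rw [sub_div]; linarith [hmem.1]
  have hpow : ((2 : ℝ) ^ j) ^ 3 * ((2 : ℝ) ^ j) ^ (2 * H - 3) = 2 ^ (2 * j * H) := by
    rw [← rpow_natCast (2 : ℝ) j, ← rpow_mul zero_le_two, ← rpow_natCast _ 3,
      ← rpow_mul zero_le_two, ← rpow_add two_pos]
    congr 1; push_cast; ring
  calc coeff1 H t (2 ^ j + k) ^ 2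
      ≤ (H - 1 / 2) ^ 2 / 16 / (2 ^ j) ^ 3 * (t - (k + 1) / 2 ^ j) ^ (2 * H - 3) :=
        coeff1_two_pow_add_sq_le (by linarith) (by linarith) hk (by linarith [div_pos hd he])
    _ ≤ (H - 1 / 2) ^ 2 / 16 / (2 ^ j) ^ 3 * (d / 2 ^ j) ^ (2 * H - 3) := by
        refine mul_le_mul_of_nonneg_left ?_ (by positivity)
        exact rpow_le_rpow_of_nonpos (div_pos hd he) hdt (by linarith)
    _ = _ := by
        rw [div_rpow hd.le he.le, rpow_neg zero_le_two, ← hpow]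
        field_simp

/-- bound on the Haar coefficient of `f_t^{(1)}` at `n = 2^j + k`
with `k + 2 ≤ k̂_{t,j}`. -/
theorem stmt9 (H : ℝ) (hH : H ∈ Set.Ioo (0 : ℝ) 1) (t : ℝ) (ht : t ∈ Set.Ioc (0 : ℝ) 1)
    (j khat : ℕ) (hkhat : khat < 2 ^ j)
    (hmem : (khat : ℝ) / 2 ^ j ≤ t ∧ (t < ((khat : ℝ) + 1) / 2 ^ j ∨ khat + 1 = 2 ^ j))
    (k : ℕ) (hk : k < 2 ^ j) (hkk : k + 2 ≤ khat) :
    (coeff1 H t (2 ^ j + k)) ^ 2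
      ≤ (2 : ℝ) ^ (-(2 * (j : ℝ) * H)) * ((khat : ℝ) - ((k : ℝ) + 1)) ^ (2 * H - 3)
          * (H - 1/2) ^ 2 / 16 :=
  stmt9_general H hH t j khat hmem k hk hkk
end
end

section
/- There is an absolute constant D > 0 such that for every H ∈ (0,1) and every integer j ≥ 0, the function ψ(s) = s^{H − 1/2} on (0,1] satisfies ∑_{k=0}^{2^j − 1} ⟨ψ, ℋ_{2^j + k}⟩² ≤ D · 2^{−2jH} · ∑_{ℓ=1}^∞ ℓ^{2H − 3}. -/
open MeasureTheory ProbabilityTheory Real Filter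

noncomputable section

lemma hm_zero_neg {x : ℝ} (h : x < 0) : haarMother x = 0 := by
  simp only [haarMother, Set.mem_Ico, Set.mem_Icc]
  rw [if_neg (by push_neg; intro h0; linarith), if_neg (by push_neg; intro h0; linarith)]

lemma hm_zero_gt {x : ℝ} (h : 1 < x) : haarMother x = 0 := by
  simp only [haarMother, Set.mem_Ico, Set.mem_Icc]
  rw [if_neg (by push_neg; intro h0; linarith), if_neg (by push_neg; intro h0; linarith)]

lemma hm_one {x : ℝ} (h0 : 0 ≤ x) (h1 : x < 1/2) : haarMother x = 1 := by
  simp only [haarMother, Set.mem_Ico, Set.mem_Icc]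
  rw [if_pos ⟨h0, h1⟩]

lemma hm_negone {x : ℝ} (h0 : 1/2 ≤ x) (h1 : x ≤ 1) : haarMother x = -1 := by
  simp only [haarMother, Set.mem_Ico, Set.mem_Icc]
  rw [if_neg (by push_neg; intro h2; linarith), if_pos ⟨h0, h1⟩]

lemma haar_eval (j k : ℕ) (hk : k < 2^j) (s : ℝ) :
    haarFun (2^j + k) s = (2:ℝ)^((j:ℝ)/2) * haarMother ((2:ℝ)^j * s - k) := by
  have hn : 2^j + k ≠ 0 := by positivity
  have hlog : Nat.log2 (2^j + k) = j := by
    rw [Nat.log2_eq_log_two]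
    exact Nat.log_eq_of_pow_le_of_lt_pow (Nat.le_add_right _ _) (by rw [pow_succ]; omega)
  simp only [haarFun, if_neg hn, hlog, Nat.add_sub_cancel_left]

lemma II_congr {f g : ℝ → ℝ} {u v : ℝ} (huv : u ≤ v)
    (he : ∀ᵐ x : ℝ, x ∈ Set.Ioc u v → f x = g x)
    (hg : IntervalIntegrable g volume u v) : IntervalIntegrable f volume u v := by
  rw [intervalIntegrable_iff_integrableOn_Ioc_of_le huv] at hg ⊢
  exact hg.congr (Filter.EventuallyEq.symm ((ae_restrict_iff' measurableSet_Ioc).2 he))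

lemma coeff_eq (H : ℝ) (hH : 0 < H) (j k : ℕ) (hk : k < 2^j) :
    innerUnit (fun s => s ^ (H - 1/2)) (haarFun (2^j + k)) =
      (2:ℝ)^((j:ℝ)/2) *
        ((∫ s in ((k:ℝ)/2^j)..(((k:ℝ)+1/2)/2^j), s ^ (H-1/2)) -
          ∫ s in (((k:ℝ)+1/2)/2^j)..(((k:ℝ)+1)/2^j), s ^ (H-1/2)) := by
  have hr : (-1:ℝ) < H - 1/2 := by linarith
  simp only [innerUnit, haar_eval j k hk]
  have hrw : ∀ s : ℝ, s ^ (H-1/2) * ((2:ℝ)^((j:ℝ)/2) * haarMother ((2:ℝ)^j * s - k))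
      = (2:ℝ)^((j:ℝ)/2) * (s ^ (H-1/2) * haarMother ((2:ℝ)^j * s - k)) := fun s => by ring
  simp only [hrw]
  rw [intervalIntegral.integral_const_mul]
  congr 1
  set T : ℝ := (2:ℝ)^j with hT
  have hT0 : (0:ℝ) < T := by positivity
  set g : ℝ → ℝ := fun s => s ^ (H-1/2) * haarMother (T * s - k) with hg
  set a : ℝ := (k:ℝ)/T with hadef
  set m : ℝ := ((k:ℝ)+1/2)/T with hmdef
  set b : ℝ := ((k:ℝ)+1)/T with hbdef
  have hkT : (k:ℝ) + 1 ≤ T := by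
    have h1 : ((k+1 : ℕ) : ℝ) ≤ ((2^j : ℕ) : ℝ) := by exact_mod_cast hk
    push_cast at h1
    simpa [hT] using h1
  have h0a : (0:ℝ) ≤ a := by positivity
  have ham : a < m := by rw [hadef, hmdef, div_lt_div_iff₀ hT0 hT0]; nlinarith
  have hmb : m < b := by rw [hmdef, hbdef, div_lt_div_iff₀ hT0 hT0]; nlinarith
  have hb1 : b ≤ 1 := by rw [hbdef, div_le_one hT0]; exact hkT
  have hae_a : ∀ᵐ x : ℝ, x ≠ a := by rw [Filter.eventually_iff, mem_ae_iff]; simp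
  have hae_m : ∀ᵐ x : ℝ, x ≠ m := by rw [Filter.eventually_iff, mem_ae_iff]; simp
  have E1 : ∀ᵐ x : ℝ, x ∈ Set.Ioc (0:ℝ) a → g x = 0 := by
    filter_upwards [hae_a] with x hxa hx
    have h1 : x < a := lt_of_le_of_ne hx.2 hxa
    have h2 : x * T < (k:ℝ) := (lt_div_iff₀ hT0).1 h1
    rw [hg]
    simp only
    rw [hm_zero_neg (by linarith [mul_comm x T]), mul_zero]
  have E2 : ∀ᵐ x : ℝ, x ∈ Set.Ioc a m → g x = x ^ (H-1/2) := by
    filter_upwards [hae_m] with x hxm hx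
    have h1 : (k:ℝ) < x * T := (div_lt_iff₀ hT0).1 hx.1
    have hx2 : x < m := lt_of_le_of_ne hx.2 hxm
    have h2 : x * T < (k:ℝ) + 1/2 := (lt_div_iff₀ hT0).1 hx2
    rw [hg]
    simp only
    rw [hm_one (by linarith [mul_comm x T]) (by linarith [mul_comm x T]), mul_one]
  have E3 : ∀ x : ℝ, x ∈ Set.Ioc m b → g x = -(x ^ (H-1/2)) := by
    intro x hx
    have h1 : (k:ℝ) + 1/2 < x * T := (div_lt_iff₀ hT0).1 hx.1
    have h2 : x * T ≤ (k:ℝ) + 1 := (le_div_iff₀ hT0).1 hx.2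
    rw [hg]
    simp only
    rw [hm_negone (by linarith [mul_comm x T]) (by linarith [mul_comm x T])]
    ring
  have E4 : ∀ x : ℝ, x ∈ Set.Ioc b 1 → g x = 0 := by
    intro x hx
    have h1 : (k:ℝ) + 1 < x * T := (div_lt_iff₀ hT0).1 hx.1
    rw [hg]
    simp only
    rw [hm_zero_gt (by linarith [mul_comm x T]), mul_zero]
  have hpsi : ∀ u v : ℝ, IntervalIntegrable (fun s : ℝ => s ^ (H-1/2)) volume u v :=
    fun u v => intervalIntegral.intervalIntegrable_rpow' hr
  have I1 : IntervalIntegrable g volume 0 a :=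
    II_congr h0a E1 (by simpa using intervalIntegrable_const (c := (0:ℝ)))
  have I2 : IntervalIntegrable g volume a m := II_congr ham.le E2 (hpsi a m)
  have I3 : IntervalIntegrable g volume m b :=
    II_congr hmb.le (Filter.Eventually.of_forall E3) (hpsi m b).neg
  have I4 : IntervalIntegrable g volume b 1 :=
    II_congr hb1 (Filter.Eventually.of_forall E4) (by simpa using intervalIntegrable_const (c := (0:ℝ)))
  have h01 := intervalIntegral.integral_add_adjacent_intervals I1 I2
  have h02 := intervalIntegral.integral_add_adjacent_intervals (I1.trans I2) I3
  have h03 := intervalIntegral.integral_add_adjacent_intervals ((I1.trans I2).trans I3) I4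
  have J1 : (∫ s in (0:ℝ)..a, g s) = 0 := by
    rw [intervalIntegral.integral_congr_ae (by simpa only [Set.uIoc_of_le h0a] using E1)]
    simp
  have J2 : (∫ s in a..m, g s) = ∫ s in a..m, s ^ (H-1/2) := by
    exact intervalIntegral.integral_congr_ae (by simpa only [Set.uIoc_of_le ham.le] using E2)
  have J3 : (∫ s in m..b, g s) = -∫ s in m..b, s ^ (H-1/2) := by
    rw [intervalIntegral.integral_congr_ae
      (by simpa only [Set.uIoc_of_le hmb.le] using Filter.Eventually.of_forall E3)]
    exact intervalIntegral.integral_neg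
  have J4 : (∫ s in b..1, g s) = 0 := by
    rw [intervalIntegral.integral_congr_ae
      (by simpa only [Set.uIoc_of_le hb1] using Filter.Eventually.of_forall E4)]
    simp
  rw [← h03, ← h02, ← h01, J1, J2, J3, J4]
  ring

lemma coeff_eq2 (H : ℝ) (h0 : 0 < H) (h1 : H < 1) (j k : ℕ) (hk : k < 2^j) :
    innerUnit (fun s => s ^ (H - 1/2)) (haarFun (2^j + k)) =
      (2:ℝ)^(-((j:ℝ)*H)) *
        ((2*((k:ℝ)+1/2)^(H+1/2) - (k:ℝ)^(H+1/2) - ((k:ℝ)+1)^(H+1/2)) / (H+1/2)) := by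
  rw [coeff_eq H h0 j k hk]
  rw [integral_rpow (Or.inl (by linarith)), integral_rpow (Or.inl (by linarith))]
  have hq : H - 1/2 + 1 = H + 1/2 := by ring
  rw [hq]
  have hq0 : (0:ℝ) < H + 1/2 := by linarith
  have hT0 : (0:ℝ) < (2:ℝ)^j := by positivity
  rw [Real.div_rpow (by positivity) hT0.le, Real.div_rpow (by positivity) hT0.le,
    Real.div_rpow (by positivity) hT0.le]
  have e1 : ((2:ℝ)^(j:ℕ)) ^ (H+1/2) = (2:ℝ)^((j:ℝ)*(H+1/2)) := by
    rw [← Real.rpow_natCast 2 j, ← Real.rpow_mul (by norm_num)]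
  have e3 : (2:ℝ)^((j:ℝ)/2) = (2:ℝ)^(-((j:ℝ)*H)) * (2:ℝ)^((j:ℝ)*(H+1/2)) := by
    rw [← Real.rpow_add (by norm_num)]
    congr 1
    ring
  rw [e1, e3]
  have hP : (0:ℝ) < (2:ℝ)^((j:ℝ)*(H+1/2)) := by positivity
  field_simp
  ring

lemma delta_bound {q : ℝ} (hq1 : 1/2 < q) (hq2 : q < 3/2) {x : ℝ} (hx : 1 ≤ x) :
    |2*(x+1/2)^q - x^q - (x+1)^q| ≤ (3/8) * x^(q-2) := by
  have hx0 : (0:ℝ) < x := by linarith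
  have cont : ∀ (p u v : ℝ), 1 ≤ u → ContinuousOn (fun y : ℝ => y ^ p) (Set.Icc u v) :=
    fun p u v hu y hy =>
      (Real.continuousAt_rpow_const y p (Or.inl (ne_of_gt (by linarith [hy.1])))).continuousWithinAt
  obtain ⟨ξ1, hξ1, hs1⟩ := exists_hasDerivAt_eq_slope (fun z : ℝ => z ^ q)
    (fun y => q * y ^ (q-1)) (by linarith : x < x + 1/2) (cont q x (x+1/2) hx)
    (fun y hy => Real.hasDerivAt_rpow_const (Or.inl (ne_of_gt (by linarith [hy.1]))))
  obtain ⟨ξ2, hξ2, hs2⟩ := exists_hasDerivAt_eq_slope (fun z : ℝ => z ^ q)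
    (fun y => q * y ^ (q-1)) (by linarith : x + 1/2 < x + 1) (cont q (x+1/2) (x+1) (by linarith))
    (fun y hy => Real.hasDerivAt_rpow_const (Or.inl (ne_of_gt (by linarith [hy.1]))))
  have hξ12 : ξ1 < ξ2 := by linarith [hξ1.2, hξ2.1]
  obtain ⟨ξ3, hξ3, hs3⟩ := exists_hasDerivAt_eq_slope (fun z : ℝ => z ^ (q-1))
    (fun y => (q-1) * y ^ (q-2)) hξ12 (cont (q-1) ξ1 ξ2 (by linarith [hξ1.1]))
    (fun y hy => by
      have hne : y ≠ 0 := ne_of_gt (by linarith [hy.1, hξ1.1])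
      have h := Real.hasDerivAt_rpow_const (p := q-1) (x := y) (Or.inl hne)
      rw [show q - 1 - 1 = q - 2 from by ring] at h
      exact h)
  rw [eq_div_iff (by norm_num : (x + 1/2 - x : ℝ) ≠ 0)] at hs1
  rw [eq_div_iff (by norm_num : (x + 1 - (x + 1/2) : ℝ) ≠ 0)] at hs2
  rw [eq_div_iff (by linarith : (ξ2 - ξ1 : ℝ) ≠ 0)] at hs3
  have key : 2*(x+1/2)^q - x^q - (x+1)^q
      = -((1/2) * q * ((q-1) * ξ3^(q-2) * (ξ2-ξ1))) := by
    linear_combination hs2 - hs1 + q/2 * hs3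
  have hP0 : (0:ℝ) ≤ ξ3^(q-2) := Real.rpow_nonneg (by linarith [hξ3.1, hξ1.1]) _
  have hP : ξ3^(q-2) ≤ x^(q-2) :=
    Real.rpow_le_rpow_of_nonpos hx0 (by linarith [hξ3.1, hξ1.1]) (by linarith)
  have hxq : (0:ℝ) ≤ x^(q-2) := Real.rpow_nonneg hx0.le _
  have hd0 : (0:ℝ) < ξ2 - ξ1 := by linarith
  have hd1 : ξ2 - ξ1 ≤ 1 := by linarith [hξ1.1, hξ2.2]
  have habs : |q - 1| ≤ 1/2 := abs_le.mpr ⟨by linarith, by linarith⟩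
  rw [key, abs_neg, abs_mul, abs_mul, abs_mul, abs_mul, abs_of_nonneg hP0,
    abs_of_nonneg hd0.le, abs_of_nonneg (by linarith : (0:ℝ) ≤ q),
    abs_of_nonneg (by norm_num : (0:ℝ) ≤ (1/2:ℝ))]
  have b1 : |q-1| * ξ3^(q-2) ≤ (1/2) * x^(q-2) := mul_le_mul habs hP hP0 (by norm_num)
  have b2 : |q-1| * ξ3^(q-2) * (ξ2-ξ1) ≤ (1/2) * x^(q-2) * 1 :=
    mul_le_mul b1 hd1 hd0.le (by positivity)
  have b3 : q * (|q-1| * ξ3^(q-2) * (ξ2-ξ1)) ≤ (3/2) * ((1/2) * x^(q-2) * 1) :=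
    mul_le_mul (by linarith) b2
      (mul_nonneg (mul_nonneg (abs_nonneg _) hP0) hd0.le) (by norm_num)
  nlinarith [b3]

/-- level-`j` bound for the squared Haar coefficients of
`ψ(s) = s^(H-1/2)`. -/
theorem stmt15 :
    ∃ D : ℝ, 0 < D ∧
      ∀ H : ℝ, H ∈ Set.Ioo (0 : ℝ) 1 →
      ∀ j : ℕ,
        (∑ k ∈ Finset.range (2 ^ j),
            (innerUnit (fun s => s ^ (H - 1/2)) (haarFun (2 ^ j + k))) ^ 2)
          ≤ D * (2 : ℝ) ^ (-(2 * (j : ℝ) * H)) * ∑' ℓ : ℕ, ((ℓ : ℝ) + 1) ^ (2 * H - 3) := by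
  refine ⟨9, by norm_num, ?_⟩
  rintro H ⟨h0, h1⟩ j
  have hsum : Summable (fun ℓ : ℕ => ((ℓ:ℝ)+1)^(2*H-3)) := by
    have h := Real.summable_nat_rpow (p := 2*H-3) |>.mpr (by linarith)
    have h2 := (summable_nat_add_iff 1).mpr h
    simpa using h2
  have key : ∀ k ∈ Finset.range (2^j),
      (innerUnit (fun s => s ^ (H-1/2)) (haarFun (2^j + k)))^2 ≤
        9 * ((2:ℝ)^(-(2*(j:ℝ)*H)) * (((k:ℝ)+1)^(2*H-3))) := by
    intro k hkmem
    rw [Finset.mem_range] at hkmem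
    rw [coeff_eq2 H h0 h1 j k hkmem]
    set Δ : ℝ := 2*((k:ℝ)+1/2)^(H+1/2) - (k:ℝ)^(H+1/2) - ((k:ℝ)+1)^(H+1/2) with hΔdef
    have hv0 : (0:ℝ) ≤ ((k:ℝ)+1)^(H+1/2-2) := Real.rpow_nonneg (by positivity) _
    have hΔ : |Δ| ≤ (3/2) * (((k:ℝ)+1)^(H+1/2-2)) := by
      rcases Nat.eq_zero_or_pos k with rfl | hk1
      · rw [hΔdef]
        norm_num
        have hle : ((1:ℝ)/2)^(H+1/2) ≤ 1 :=
          Real.rpow_le_one (by norm_num) (by norm_num) (by linarith)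
        have hge : (0:ℝ) ≤ ((1:ℝ)/2)^(H+1/2) := Real.rpow_nonneg (by norm_num) _
        rw [Real.zero_rpow (by linarith : H + 1/2 ≠ 0), abs_le]
        constructor <;> nlinarith
      · have hx : (1:ℝ) ≤ (k:ℝ) := by exact_mod_cast hk1
        have hb := delta_bound (q := H+1/2) (by linarith) (by linarith) hx
        have e1 : ((2:ℝ)*(k:ℝ))^(H+1/2-2) ≤ ((k:ℝ)+1)^(H+1/2-2) :=
          Real.rpow_le_rpow_of_nonpos (by positivity) (by linarith) (by linarith)
        have e2 : ((2:ℝ)*(k:ℝ))^(H+1/2-2) = (2:ℝ)^(H+1/2-2) * (k:ℝ)^(H+1/2-2) :=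
          Real.mul_rpow (by norm_num) (by positivity)
        have e3 : (1/4:ℝ) ≤ (2:ℝ)^(H+1/2-2) := by
          have h4 : (2:ℝ)^(-2:ℝ) ≤ (2:ℝ)^(H+1/2-2) :=
            Real.rpow_le_rpow_of_exponent_le (by norm_num) (by linarith)
          have h5 : (2:ℝ)^(-2:ℝ) = 1/4 := by
            rw [show (-2:ℝ) = ((-2:ℤ):ℝ) by norm_num, Real.rpow_intCast]
            norm_num
          linarith
        have e4 : (k:ℝ)^(H+1/2-2) ≤ 4 * ((k:ℝ)+1)^(H+1/2-2) := by
          have hk0 : (0:ℝ) ≤ (k:ℝ)^(H+1/2-2) := Real.rpow_nonneg (by positivity) _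
          nlinarith [e1, e2, e3, hk0]
        calc |Δ| ≤ (3/8) * (k:ℝ)^(H+1/2-2) := hb
          _ ≤ (3/2) * (((k:ℝ)+1)^(H+1/2-2)) := by nlinarith [e4]
    have hu0 : (0:ℝ) ≤ (2:ℝ)^(-((j:ℝ)*H)) := Real.rpow_nonneg (by norm_num) _
    have hbound : |(2:ℝ)^(-((j:ℝ)*H)) * (Δ / (H+1/2))|
        ≤ 3 * ((2:ℝ)^(-((j:ℝ)*H)) * (((k:ℝ)+1)^(H+1/2-2))) := by
      rw [abs_mul, abs_of_nonneg hu0, abs_div, abs_of_nonneg (by linarith : (0:ℝ) ≤ H+1/2)]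
      have hdd : |Δ| / (H+1/2) ≤ 3 * (((k:ℝ)+1)^(H+1/2-2)) := by
        rw [div_le_iff₀ (by linarith)]
        nlinarith [hv0, hΔ, abs_nonneg Δ]
      have := mul_le_mul_of_nonneg_left hdd hu0
      nlinarith [this]
    have hsq : ((2:ℝ)^(-((j:ℝ)*H)) * (Δ / (H+1/2)))^2
        ≤ (3 * ((2:ℝ)^(-((j:ℝ)*H)) * (((k:ℝ)+1)^(H+1/2-2))))^2 := by
      rw [← sq_abs]
      exact pow_le_pow_left₀ (abs_nonneg _) hbound 2
    refine hsq.trans (le_of_eq ?_)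
    have hu2 : ((2:ℝ)^(-((j:ℝ)*H)))^2 = (2:ℝ)^(-(2*(j:ℝ)*H)) := by
      rw [← Real.rpow_natCast ((2:ℝ)^(-((j:ℝ)*H))) 2, ← Real.rpow_mul (by norm_num)]
      congr 1
      push_cast
      ring
    have hv2 : (((k:ℝ)+1)^(H+1/2-2))^2 = ((k:ℝ)+1)^(2*H-3) := by
      rw [← Real.rpow_natCast (((k:ℝ)+1)^(H+1/2-2)) 2, ← Real.rpow_mul (by positivity)]
      congr 1
      push_cast
      ring
    rw [mul_pow, mul_pow, hu2, hv2]
    norm_num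
  calc (∑ k ∈ Finset.range (2 ^ j),
          (innerUnit (fun s => s ^ (H - 1/2)) (haarFun (2 ^ j + k))) ^ 2)
      ≤ ∑ k ∈ Finset.range (2 ^ j), 9 * ((2:ℝ)^(-(2*(j:ℝ)*H)) * (((k:ℝ)+1)^(2*H-3))) :=
        Finset.sum_le_sum key
    _ = 9 * (2:ℝ)^(-(2*(j:ℝ)*H)) * ∑ k ∈ Finset.range (2 ^ j), ((k:ℝ)+1)^(2*H-3) := by
        rw [Finset.mul_sum]
        congr 1
        ext k
        ring
    _ ≤ 9 * (2:ℝ)^(-(2*(j:ℝ)*H)) * ∑' ℓ : ℕ, ((ℓ:ℝ)+1)^(2*H-3) := by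
        apply mul_le_mul_of_nonneg_left
          (Summable.sum_le_tsum _ (fun i _ => Real.rpow_nonneg (by positivity) _) hsum)
          (by positivity)
    _ = 9 * ((2:ℝ)^(-(2*(j:ℝ)*H))) * ∑' ℓ : ℕ, ((ℓ:ℝ)+1)^(2*H-3) := by ring
end
end

section
/- For every H ∈ (0,1), every u ∈ [−1,0) and every t ∈ [0,1], one has |(−u^{−1})^{H − 3/2} − (t − u^{−1})^{H − 3/2}| ≤ (3/2) · (−u)^{5/2 − H}. -/
open MeasureTheory ProbabilityTheory Real Filter

noncomputable section

/-!
With `a = -u⁻¹ > 0` and `c = H - 3/2 ∈ (-3/2, 0)` the quantity is `a ^ c - (a + t) ^ c`. Since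
`x ↦ x ^ c` is decreasing with derivative increasing to `0`, the mean value theorem bounds it by
`|c| a ^ (c - 1) t ≤ (3/2) a ^ (c - 1)`, and `a ^ (c - 1) = (-u) ^ (5/2 - H)`.
-/

theorem Real.rpow_sub_rpow_le_of_nonpos {a b c : ℝ} (ha : 0 < a) (hab : a ≤ b) (hc : c ≤ 0) :
    a ^ c - b ^ c ≤ -c * a ^ (c - 1) * (b - a) := by
  have hcont : ContinuousOn (fun x : ℝ => x ^ c) (Set.Icc a b) :=
    continuousOn_id.rpow_const fun x hx => Or.inl (ha.trans_le hx.1).ne'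
  have hdiff : DifferentiableOn ℝ (fun x : ℝ => x ^ c) (interior (Set.Icc a b)) := by
    rw [interior_Icc]
    exact fun x hx =>
      (Real.differentiableAt_rpow_const_of_ne c (ha.trans hx.1).ne').differentiableWithinAt
  have hderiv : ∀ x ∈ interior (Set.Icc a b), c * a ^ (c - 1) ≤ deriv (fun x : ℝ => x ^ c) x := by
    rw [interior_Icc]
    intro x hx
    rw [Real.deriv_rpow_const]
    exact mul_le_mul_of_nonpos_left
      (Real.rpow_le_rpow_of_nonpos ha hx.1.le (by linarith)) hc
  have := (convex_Icc a b).mul_sub_le_image_sub_of_le_deriv hcont hdiff hderiv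
    a (Set.left_mem_Icc.2 hab) b (Set.right_mem_Icc.2 hab) hab
  linarith

/-- pointwise bound on the kernel difference. -/
theorem stmt16 (H : ℝ) (hH : H ∈ Set.Ioo (0 : ℝ) 1) (u : ℝ) (hu : u ∈ Set.Ico (-1 : ℝ) 0)
    (t : ℝ) (ht : t ∈ Set.Icc (0 : ℝ) 1) :
    |(-u⁻¹) ^ (H - 3/2) - (t - u⁻¹) ^ (H - 3/2)| ≤ (3/2) * (-u) ^ (5/2 - H) := by
  obtain ⟨hH0, hH1⟩ := hH
  obtain ⟨ht0, ht1⟩ := ht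
  have hnu : 0 < -u := neg_pos.2 hu.2
  have ha : 0 < -u⁻¹ := by rw [← inv_neg]; positivity
  have hab : -u⁻¹ ≤ t - u⁻¹ := by linarith
  have hc : H - 3/2 ≤ 0 := by linarith
  have hpow : (-u⁻¹) ^ (H - 3/2 - 1) = (-u) ^ (5/2 - H) := by
    rw [← inv_neg, Real.inv_rpow hnu.le, ← Real.rpow_neg hnu.le]
    ring_nf
  have hmono : (t - u⁻¹) ^ (H - 3/2) ≤ (-u⁻¹) ^ (H - 3/2) :=
    Real.rpow_le_rpow_of_nonpos ha hab hc
  have htangent := Real.rpow_sub_rpow_le_of_nonpos ha hab hc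
  rw [hpow, show t - u⁻¹ - -u⁻¹ = t by ring] at htangent
  rw [abs_of_nonneg (sub_nonneg.2 hmono)]
  calc _ ≤ -(H - 3/2) * (-u) ^ (5/2 - H) * t := htangent
    _ ≤ (3/2) * (-u) ^ (5/2 - H) * 1 := by gcongr; linarith
    _ = (3/2) * (-u) ^ (5/2 - H) := mul_one _
end
end

section
/- There is an absolute constant D > 0 such that for every H ∈ (0,1) with H ≠ 1/2, every t ∈ [0,1], every integer j ≥ 0 and every integer k with 1 ≤ k ≤ 2^j − 1, the quantity ĥ_{t,H,j,k} = 2^{j/2} ( ((2k+2)/2^{j+1}) ∫_{(2k+1)/2^{j+1}}^{(2k+2)/2^{j+1}} G_{t,H}(x) dx − (2k/2^{j+1}) ∫_{2k/2^{j+1}}^{(2k+1)/2^{j+1}} G_{t,H}(x) dx ) satisfies |ĥ_{t,H,j,k}| ≤ D · 2^{−j(1−H)} · (k+1)^{−(H + 1/2)}. -/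
open MeasureTheory ProbabilityTheory Real Filter

noncomputable section

/-- `G_{t,H}(x) = ((t + 1/x)^(H-3/2) - (1/x)^(H-3/2)) x⁻³`. -/
def Gfun (H t : ℝ) (x : ℝ) : ℝ :=
  ((t + x⁻¹) ^ (H - 3/2) - (x⁻¹) ^ (H - 3/2)) * (x⁻¹) ^ (3 : ℕ)

/-!
For `x > 0` one has `G_{t,H}(x) = x^{-(H+3/2)} ((1 + t x)^{H-3/2} - 1)`, and the Bernoulli-type
inequality `|(1 + s)^p - 1| ≤ -p s` (`p ≤ 0`, `s ≥ 0`) gives `|G| ≤ 3/2 x^{-(H+1/2)}` and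
`|G'| ≤ 6 x^{-(H+3/2)}`. With `A = 2k/2^{j+1}`, `h = 2^{-(j+1)}` and `B = A + 2h`, shifting the first
integral by `h` writes `B ∫_{A+h}^{B} G - A ∫_A^{A+h} G` as `∫_A^{A+h} (B (G(x+h) - G(x)) + 2h G(x)) dx`.
The cancellation in the first term makes the integrand `O(h B^{-(H+1/2)})` once `B ≤ 2A`, that is
`k ≥ 1`, and the dyadic scaling turns `2^{j/2} h² B^{-(H+1/2)}` into `2^{-j(1-H)} (k+1)^{-(H+1/2)} / 4`.
-/

open Set

theorem one_add_mul_le_rpow_one_add_of_nonpos {s p : ℝ} (hs : -1 < s) (hp : p ≤ 0) :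
    1 + p * s ≤ (1 + s) ^ p := by
  have hpos : 0 < 1 + s := by linarith
  have hlog : Real.log (1 + s) ≤ s := by linarith [Real.log_le_sub_one_of_pos hpos]
  calc 1 + p * s ≤ Real.log (1 + s) * p + 1 := by nlinarith
    _ ≤ (1 + s) ^ p := by rw [Real.rpow_def_of_pos hpos]; exact Real.add_one_le_exp _

theorem abs_rpow_one_add_sub_one_le {s p : ℝ} (hs : 0 ≤ s) (hp : p ≤ 0) :
    |(1 + s) ^ p - 1| ≤ -p * s := by
  have hle : (1 + s) ^ p ≤ 1 := Real.rpow_le_one_of_one_le_of_nonpos (by linarith) hp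
  rw [abs_of_nonpos (by linarith)]
  linarith [one_add_mul_le_rpow_one_add_of_nonpos (by linarith : -1 < s) hp]

theorem Gfun_eq {H t x : ℝ} (ht : 0 ≤ t) (hx : 0 < x) :
    Gfun H t x = x ^ (-(H + 3/2)) * ((1 + t * x) ^ (H - 3/2) - 1) := by
  have hsum : t + x⁻¹ = x⁻¹ * (1 + t * x) := by field_simp; ring
  have hpow : x⁻¹ ^ (H - 3/2) * x⁻¹ ^ (3 : ℕ) = x ^ (-(H + 3/2)) := by
    rw [← Real.rpow_natCast, ← Real.rpow_add (inv_pos.2 hx), Real.inv_rpow hx.le,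
      ← Real.rpow_neg hx.le]
    congr 1; ring
  rw [Gfun, hsum, Real.mul_rpow (inv_nonneg.2 hx.le) (by positivity), ← hpow]
  ring

theorem hasDerivAt_Gfun {H t x : ℝ} (ht : 0 ≤ t) (hx : 0 < x) :
    HasDerivAt (Gfun H t)
      (-(H + 3/2) * x ^ (-(H + 3/2) - 1) * ((1 + t * x) ^ (H - 3/2) - 1)
        + x ^ (-(H + 3/2)) * ((H - 3/2) * (1 + t * x) ^ (H - 3/2 - 1) * t)) x := by
  have hlin : HasDerivAt (fun y => 1 + t * y) t x := by
    simpa using ((hasDerivAt_id x).const_mul t).const_add 1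
  have hfac := ((hasDerivAt_id x).rpow_const (p := -(H + 3/2)) (Or.inl hx.ne')).mul
    ((hlin.rpow_const (p := H - 3/2) (Or.inl (by positivity))).sub_const 1)
  refine (hfac.congr_of_eventuallyEq ?_).congr_deriv (by simp only [id]; ring)
  filter_upwards [Ioi_mem_nhds hx] with y hy using Gfun_eq ht hy

theorem abs_Gfun_le {H t x : ℝ} (hH0 : 0 ≤ H) (hH1 : H ≤ 1) (ht0 : 0 ≤ t) (ht1 : t ≤ 1)
    (hx : 0 < x) :
    |Gfun H t x| ≤ 3/2 * x ^ (-(H + 1/2)) := by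
  have hψ := abs_rpow_one_add_sub_one_le (mul_nonneg ht0 hx.le) (by linarith : H - 3/2 ≤ 0)
  have hxq : x ^ (-(H + 3/2)) * x = x ^ (-(H + 1/2)) := by
    rw [← Real.rpow_add_one hx.ne']; ring_nf
  have htx : t * x ≤ x := by nlinarith
  rw [Gfun_eq ht0 hx, abs_mul, abs_of_pos (by positivity), ← hxq]
  calc x ^ (-(H + 3/2)) * |(1 + t * x) ^ (H - 3/2) - 1|
      ≤ x ^ (-(H + 3/2)) * (-(H - 3/2) * (t * x)) := by gcongr
    _ ≤ x ^ (-(H + 3/2)) * (3/2 * x) := by gcongr; nlinarith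
    _ = 3/2 * (x ^ (-(H + 3/2)) * x) := by ring

theorem abs_deriv_Gfun_le {H t x : ℝ} (hH0 : 0 ≤ H) (hH1 : H ≤ 1) (ht0 : 0 ≤ t) (ht1 : t ≤ 1)
    (hx : 0 < x) :
    |deriv (Gfun H t) x| ≤ 6 * x ^ (-(H + 3/2)) := by
  have hψ := abs_rpow_one_add_sub_one_le (mul_nonneg ht0 hx.le) (by linarith : H - 3/2 ≤ 0)
  have hψ' : (1 + t * x) ^ (H - 3/2 - 1) ≤ 1 :=
    Real.rpow_le_one_of_one_le_of_nonpos (by nlinarith) (by linarith)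
  have hxq : x ^ (-(H + 3/2) - 1) * x = x ^ (-(H + 3/2)) := by
    rw [← Real.rpow_add_one hx.ne']; ring_nf
  have hq : 0 < x ^ (-(H + 3/2)) := by positivity
  have hq1 : 0 < x ^ (-(H + 3/2) - 1) := by positivity
  have hfirst : |-(H + 3/2) * x ^ (-(H + 3/2) - 1) * ((1 + t * x) ^ (H - 3/2) - 1)|
      ≤ 15/4 * x ^ (-(H + 3/2)) := by
    rw [abs_mul, abs_mul, abs_neg, abs_of_pos (by linarith : 0 < H + 3/2), abs_of_pos hq1, ← hxq]
    calc (H + 3/2) * x ^ (-(H + 3/2) - 1) * |(1 + t * x) ^ (H - 3/2) - 1|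
        ≤ 5/2 * x ^ (-(H + 3/2) - 1) * (3/2 * x) := by
          gcongr
          · linarith
          · exact hψ.trans (by nlinarith [mul_nonneg hH0 (mul_nonneg ht0 hx.le)])
      _ = 15/4 * (x ^ (-(H + 3/2) - 1) * x) := by ring
  have hsecond : |x ^ (-(H + 3/2)) * ((H - 3/2) * (1 + t * x) ^ (H - 3/2 - 1) * t)|
      ≤ 3/2 * x ^ (-(H + 3/2)) := by
    have hpos : 0 ≤ (1 + t * x) ^ (H - 3/2 - 1) := by positivity
    rw [abs_mul, abs_mul, abs_mul, abs_of_pos hq, abs_of_nonpos (by linarith : H - 3/2 ≤ 0),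
      abs_of_nonneg hpos, abs_of_nonneg ht0, mul_comm]
    gcongr
    calc -(H - 3/2) * (1 + t * x) ^ (H - 3/2 - 1) * t ≤ 3/2 * 1 * 1 := by
          gcongr; linarith
      _ = 3/2 := by norm_num
  rw [(hasDerivAt_Gfun ht0 hx).deriv]
  linarith [abs_add_le (-(H + 3/2) * x ^ (-(H + 3/2) - 1) * ((1 + t * x) ^ (H - 3/2) - 1))
    (x ^ (-(H + 3/2)) * ((H - 3/2) * (1 + t * x) ^ (H - 3/2 - 1) * t))]

theorem abs_mul_integral_sub_mul_integral_le {f : ℝ → ℝ} {A h C₀ C₁ : ℝ} (hA : 0 ≤ A)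
    (hh : 0 ≤ h) (hf : ∀ x ∈ Icc A (A + 2 * h), DifferentiableAt ℝ f x)
    (hf₀ : ∀ x ∈ Icc A (A + 2 * h), |f x| ≤ C₀)
    (hf₁ : ∀ x ∈ Icc A (A + 2 * h), |deriv f x| ≤ C₁) :
    |(A + 2 * h) * (∫ x in (A + h)..(A + 2 * h), f x) - A * ∫ x in A..(A + h), f x|
      ≤ h ^ 2 * ((A + 2 * h) * C₁ + 2 * C₀) := by
  have hcont : ContinuousOn f (Icc A (A + 2 * h)) := fun x hx =>
    (hf x hx).continuousAt.continuousWithinAt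
  have hsub : uIcc A (A + h) ⊆ Icc A (A + 2 * h) := by
    rw [uIcc_of_le (by linarith)]; exact Icc_subset_Icc le_rfl (by linarith)
  have hint : IntervalIntegrable f volume A (A + h) :=
    (hcont.mono hsub).intervalIntegrable
  have hint_shift : IntervalIntegrable (fun x => f (x + h)) volume A (A + h) := by
    refine ((hcont.comp (continuous_add_const h).continuousOn) fun x hx => ?_).intervalIntegrable
    rw [uIcc_of_le (by linarith)] at hx
    exact ⟨by linarith [hx.1], by linarith [hx.2]⟩
  have hshift : (A + 2 * h) * (∫ x in (A + h)..(A + 2 * h), f x) - A * ∫ x in A..(A + h), f x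
      = ∫ x in A..(A + h), ((A + 2 * h) * (f (x + h) - f x) + 2 * h * f x) := by
    rw [intervalIntegral.integral_add ((hint_shift.sub hint).const_mul _) (hint.const_mul _),
      intervalIntegral.integral_const_mul, intervalIntegral.integral_const_mul,
      intervalIntegral.integral_sub hint_shift hint, intervalIntegral.integral_comp_add_right]
    ring_nf
  have hbound : ∀ x ∈ uIoc A (A + h),
      ‖(A + 2 * h) * (f (x + h) - f x) + 2 * h * f x‖ ≤ h * ((A + 2 * h) * C₁ + 2 * C₀) := by
    intro x hx
    rw [uIoc_of_le (by linarith)] at hx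
    have hx' : x ∈ Icc A (A + 2 * h) := ⟨hx.1.le, by linarith [hx.2]⟩
    have hxh : x + h ∈ Icc A (A + 2 * h) := ⟨by linarith [hx.1], by linarith [hx.2]⟩
    have hlip : |f (x + h) - f x| ≤ C₁ * h := by
      simpa [abs_of_nonneg hh] using
        (convex_Icc A (A + 2 * h)).norm_image_sub_le_of_norm_deriv_le hf hf₁ hx' hxh
    rw [Real.norm_eq_abs]
    calc |(A + 2 * h) * (f (x + h) - f x) + 2 * h * f x|
        ≤ (A + 2 * h) * |f (x + h) - f x| + 2 * h * |f x| := by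
          refine (abs_add_le _ _).trans_eq ?_
          rw [abs_mul, abs_mul, abs_of_nonneg (by linarith : 0 ≤ A + 2 * h),
            abs_of_nonneg (by linarith : 0 ≤ 2 * h)]
      _ ≤ (A + 2 * h) * (C₁ * h) + 2 * h * C₀ := by
          gcongr
          exact hf₀ x hx'
      _ = h * ((A + 2 * h) * C₁ + 2 * C₀) := by ring
  rw [hshift, ← Real.norm_eq_abs]
  refine (intervalIntegral.norm_integral_le_of_norm_le_const hbound).trans_eq ?_
  rw [add_sub_cancel_left, abs_of_nonneg hh]
  ring

theorem rpow_neg_le_two_rpow_mul_rpow_neg {A B r : ℝ} (hB : 0 < B) (hBA : B ≤ 2 * A)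
    (hr : 0 ≤ r) : A ^ (-r) ≤ 2 ^ r * B ^ (-r) := by
  calc A ^ (-r) ≤ (B / 2) ^ (-r) :=
        Real.rpow_le_rpow_of_nonpos (by positivity) (by linarith) (by linarith)
    _ = 2 ^ r * B ^ (-r) := by
        rw [Real.div_rpow hB.le zero_le_two, Real.rpow_neg zero_le_two]; field_simp

theorem abs_mul_integral_sub_mul_integral_Gfun_le {H t A h : ℝ} (hH0 : 0 ≤ H) (hH1 : H ≤ 1)
    (ht0 : 0 ≤ t) (ht1 : t ≤ 1) (hh : 0 < h) (hhA : 2 * h ≤ A) :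
    |(A + 2 * h) * (∫ x in (A + h)..(A + 2 * h), Gfun H t x) - A * ∫ x in A..(A + h), Gfun H t x|
      ≤ 60 * h ^ 2 * (A + 2 * h) ^ (-(H + 1/2)) := by
  have hA : 0 < A := by linarith
  set B := A + 2 * h
  have hB : 0 < B := by positivity
  have hBA : B ≤ 2 * A := by linarith
  have hdecay {r : ℝ} (hr : 0 ≤ r) {x : ℝ} (hx : x ∈ Icc A B) : x ^ (-r) ≤ A ^ (-r) :=
    Real.rpow_le_rpow_of_nonpos hA hx.1 (by linarith)
  have hest := abs_mul_integral_sub_mul_integral_le hA.le hh.le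
    (fun x hx => (hasDerivAt_Gfun ht0 (hA.trans_le hx.1)).differentiableAt)
    (fun x hx => (abs_Gfun_le hH0 hH1 ht0 ht1 (hA.trans_le hx.1)).trans
      (mul_le_mul_of_nonneg_left (hdecay (by linarith) hx) (by norm_num)))
    (fun x hx => (abs_deriv_Gfun_le hH0 hH1 ht0 ht1 (hA.trans_le hx.1)).trans
      (mul_le_mul_of_nonneg_left (hdecay (by linarith) hx) (by norm_num)))
  refine hest.trans ?_
  have hBB : B * B ^ (-(H + 3/2)) = B ^ (-(H + 1/2)) := by
    rw [mul_comm, ← Real.rpow_add_one hB.ne']; ring_nf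
  have htwo : (2 : ℝ) ^ (H + 3/2) = 2 * 2 ^ (H + 1/2) := by
    rw [show H + 3/2 = H + 1/2 + 1 by ring, Real.rpow_add_one two_ne_zero]; ring
  have htwo_le : (2 : ℝ) ^ (H + 1/2) ≤ 4 := by
    calc (2 : ℝ) ^ (H + 1/2) ≤ 2 ^ (2 : ℝ) :=
          Real.rpow_le_rpow_of_exponent_le one_le_two (by linarith)
      _ = 4 := by norm_num
  calc h ^ 2 * (B * (6 * A ^ (-(H + 3/2))) + 2 * (3/2 * A ^ (-(H + 1/2))))
      ≤ h ^ 2 * (B * (6 * (2 ^ (H + 3/2) * B ^ (-(H + 3/2))))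
          + 2 * (3/2 * (2 ^ (H + 1/2) * B ^ (-(H + 1/2))))) := by
        gcongr <;> exact rpow_neg_le_two_rpow_mul_rpow_neg hB hBA (by linarith)
    _ = 15 * 2 ^ (H + 1/2) * h ^ 2 * B ^ (-(H + 1/2)) := by
        rw [htwo, ← hBB]; ring
    _ ≤ 60 * h ^ 2 * B ^ (-(H + 1/2)) := by gcongr; linarith

theorem two_rpow_half_mul_dyadic_rpow_neg (j : ℕ) {H y : ℝ} (hy : 0 < y) :
    (2 : ℝ) ^ ((j : ℝ) / 2) * (60 * ((2 : ℝ) ^ (j + 1))⁻¹ ^ 2 * (2 * y / 2 ^ (j + 1)) ^ (-(H + 1/2)))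
      = 15 * (2 : ℝ) ^ (-(j : ℝ) * (1 - H)) * y ^ (-(H + 1/2)) := by
  have hpow : ((2 : ℝ) ^ (j + 1))⁻¹ = 2 ^ (-((j : ℝ) + 1)) := by
    rw [Real.rpow_neg zero_le_two, ← Real.rpow_natCast]; push_cast; rfl
  have hy' : 2 * y / 2 ^ (j + 1) = y * 2 ^ (-(j : ℝ)) := by
    rw [Real.rpow_neg zero_le_two, Real.rpow_natCast, pow_succ]; field_simp
  rw [hy', Real.mul_rpow hy.le (by positivity), ← Real.rpow_mul zero_le_two, hpow,
    ← Real.rpow_natCast, ← Real.rpow_mul zero_le_two]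
  have hsplit : (2 : ℝ) ^ ((j : ℝ) / 2) * (2 ^ (-((j : ℝ) + 1) * (2 : ℕ))
      * 2 ^ (-(j : ℝ) * -(H + 1/2))) = 4⁻¹ * 2 ^ (-(j : ℝ) * (1 - H)) := by
    rw [← Real.rpow_add two_pos, ← Real.rpow_add two_pos, show (4 : ℝ)⁻¹ = 2 ^ (-2 : ℝ) by norm_num,
      ← Real.rpow_add two_pos]
    congr 1; push_cast; ring
  calc (2 : ℝ) ^ ((j : ℝ) / 2) * (60 * 2 ^ (-((j : ℝ) + 1) * (2 : ℕ))
        * (y ^ (-(H + 1/2)) * 2 ^ (-(j : ℝ) * -(H + 1/2))))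
      = 60 * ((2 : ℝ) ^ ((j : ℝ) / 2) * (2 ^ (-((j : ℝ) + 1) * (2 : ℕ))
          * 2 ^ (-(j : ℝ) * -(H + 1/2)))) * y ^ (-(H + 1/2)) := by ring
    _ = 15 * (2 : ℝ) ^ (-(j : ℝ) * (1 - H)) * y ^ (-(H + 1/2)) := by rw [hsplit]; ring

/-- bound on `ĥ_{t,H,j,k}`. -/
theorem stmt18 :
    ∃ D : ℝ, 0 < D ∧
      ∀ H : ℝ, H ∈ Set.Ioo (0 : ℝ) 1 → H ≠ 1/2 →
      ∀ t : ℝ, t ∈ Set.Icc (0 : ℝ) 1 →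
      ∀ j : ℕ, ∀ k : ℕ, 1 ≤ k → k ≤ 2 ^ j - 1 →
        |(2 : ℝ) ^ ((j : ℝ) / 2) *
          (((2 * (k : ℝ) + 2) / 2 ^ (j + 1)) *
              (∫ x in ((2 * (k : ℝ) + 1) / 2 ^ (j + 1))..((2 * (k : ℝ) + 2) / 2 ^ (j + 1)),
                Gfun H t x)
           - (2 * (k : ℝ) / 2 ^ (j + 1)) *
              (∫ x in (2 * (k : ℝ) / 2 ^ (j + 1))..((2 * (k : ℝ) + 1) / 2 ^ (j + 1)),
                Gfun H t x))|
          ≤ D * (2 : ℝ) ^ (-(j : ℝ) * (1 - H)) * ((k : ℝ) + 1) ^ (-(H + 1/2)) := by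
  refine ⟨15, by norm_num, ?_⟩
  rintro H ⟨hH0, hH1⟩ - t ⟨ht0, ht1⟩ j k hk -
  set h : ℝ := ((2 : ℝ) ^ (j + 1))⁻¹
  set A : ℝ := 2 * (k : ℝ) / 2 ^ (j + 1)
  have hM : (2 * (k : ℝ) + 1) / 2 ^ (j + 1) = A + h := by simp only [A, h]; field_simp
  have hB : (2 * (k : ℝ) + 2) / 2 ^ (j + 1) = A + 2 * h := by simp only [A, h]; field_simp
  have hhA : 2 * h ≤ A := by
    simp only [A, h]
    rw [← div_eq_mul_inv]
    gcongr
    exact_mod_cast Nat.mul_le_mul_left 2 hk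
  rw [hM, hB, abs_mul, abs_of_pos (by positivity)]
  calc (2 : ℝ) ^ ((j : ℝ) / 2) * |(A + 2 * h) * (∫ x in (A + h)..(A + 2 * h), Gfun H t x)
        - A * ∫ x in A..(A + h), Gfun H t x|
      ≤ (2 : ℝ) ^ ((j : ℝ) / 2) * (60 * h ^ 2 * (A + 2 * h) ^ (-(H + 1/2))) := by
        gcongr
        exact abs_mul_integral_sub_mul_integral_Gfun_le hH0.le hH1.le ht0 ht1 (by positivity) hhA
    _ = 15 * (2 : ℝ) ^ (-(j : ℝ) * (1 - H)) * ((k : ℝ) + 1) ^ (-(H + 1/2)) := by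
        rw [← hB, show 2 * (k : ℝ) + 2 = 2 * ((k : ℝ) + 1) by ring]
        exact two_rpow_half_mul_dyadic_rpow_neg j (by positivity)
end
end
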